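/- Suppose each f_i is convex and L_i-smooth and x* is a global minimizer of F (so ∇F(x*) = 0). Let p be a probability vector with positive entries, x, w ∈ ℝ^d, η > 0, β > 0, and g_i = (1/(n p_i))(∇f_i(x) − ∇f_i(w)) + ∇F(w). Then ∑_{i=1}^n p_i ⟨g_i − ∇F(x), −ηg_i⟩ ≥ −2βL̄(F(x) − F(x*)) − βL̄·D(w) − (β/2)(V_e(p; x, w) − V_e(p^IS; x, w)) − (1/(2β))∑_{i=1}^n p_i ‖ηg_i‖², where D(w) = (1/n)∑_{i=1}^n (1/L_i)‖∇f_i(w) − ∇f_i(x*)‖². -/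

import Mathlib

/-!
Young's inequality bounds each term `⟪g i - ∇F x, -η g i⟫` below by
`-(β/2) ‖g i - ∇F x‖² - (1/(2β)) ‖η g i‖²`. Under `p`, `g i - ∇F x` is the centred version of
`b i = (∇f i x - ∇f i w) / (n p i)`, so its `p`-weighted second moment is at most `V_e(p)`.
Finally `V_e(p^IS) = L̄ (1/n) ∑ (1/L i) ‖∇f i x - ∇f i w‖²`; splitting through `∇f i x*` and using
co-coercivity, `‖∇f i x - ∇f i x*‖² ≤ 2 L i (f i x - f i x* - ⟪∇f i x*, x - x*⟫)`, together with
`∇F x* = 0`, bounds this by `4 L̄ (F x - F x*) + 2 L̄ D(w)`.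
-/

open MeasureTheory Finset
open scoped RealInnerProductSpace BigOperators

abbrev Euc (d : ℕ) := EuclideanSpace ℝ (Fin d)

/-- The finite-sum objective `F(x) = (1/n) ∑ f i x`. -/
noncomputable def avgF {d : ℕ} (n : ℕ) (f : Fin n → Euc d → ℝ) (x : Euc d) : ℝ :=
  (1 / (n : ℝ)) * ∑ i, f i x

/-- The gradient of the finite-sum objective, `∇F(x) = (1/n) ∑ ∇f i x`. -/
noncomputable def avgG {d : ℕ} (n : ℕ) (f' : Fin n → Euc d → Euc d) (x : Euc d) : Euc d :=
  (1 / (n : ℝ)) • ∑ i, f' i x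

/-- The effective sampling variance `V_e(q; x, w)`. -/
noncomputable def Ve {d : ℕ} (n : ℕ) (f' : Fin n → Euc d → Euc d)
    (q : Fin n → ℝ) (x w : Euc d) : ℝ :=
  (1 / (n : ℝ) ^ 2) * ∑ i, (1 / q i) * ‖f' i x - f' i w‖ ^ 2

/-- The average smoothness constant `L̄ = (1/n) ∑ L i`. -/
noncomputable def Lbar (n : ℕ) (L : Fin n → ℝ) : ℝ := (1 / (n : ℝ)) * ∑ i, L i

/-- The importance sampling distribution `p^IS_i = L i / (n L̄)`. -/
noncomputable def pIS (n : ℕ) (L : Fin n → ℝ) (i : Fin n) : ℝ :=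
  L i / ((n : ℝ) * Lbar n L)

/-- `D(w) = (1/n) ∑ (1 / L i) ‖∇f i w - ∇f i x*‖²`. -/
noncomputable def Dfun {d : ℕ} (n : ℕ) (f' : Fin n → Euc d → Euc d) (L : Fin n → ℝ)
    (xstar w : Euc d) : ℝ :=
  (1 / (n : ℝ)) * ∑ i, (1 / L i) * ‖f' i w - f' i xstar‖ ^ 2

section SmoothConvex

variable {E : Type*} [NormedAddCommGroup E] [InnerProductSpace ℝ E] [CompleteSpace E]
  {f : E → ℝ} {f' : E → E}

theorem HasGradientAt.hasDerivAt_comp_add_smul {g u v : E} {t : ℝ}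
    (h : HasGradientAt f g (u + t • v)) :
    HasDerivAt (fun s : ℝ => f (u + s • v)) ⟪g, v⟫ t := by
  have hline : HasDerivAt (fun s : ℝ => u + s • v) v t := by
    simpa using ((hasDerivAt_id t).smul_const v).const_add u
  have hcomp := h.hasFDerivAt.comp_hasDerivAt t hline
  simp only [InnerProductSpace.toDual_apply_apply] at hcomp
  exact hcomp

theorem le_add_inner_add_sq_of_lipschitz_gradient {L : ℝ}
    (hgrad : ∀ x, HasGradientAt f (f' x) x) (hlip : ∀ x y, ‖f' x - f' y‖ ≤ L * ‖x - y‖)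
    (u z : E) : f z ≤ f u + ⟪f' u, z - u⟫ + L / 2 * ‖z - u‖ ^ 2 := by
  set v := z - u
  -- `f` on the segment minus its quadratic model; a Lipschitz gradient makes `φ'` nonpositive.
  set φ : ℝ → ℝ := fun t => f (u + t • v) - t * ⟪f' u, v⟫ - L / 2 * t ^ 2 * ‖v‖ ^ 2
  have hφ : ∀ t, HasDerivAt φ (⟪f' (u + t • v) - f' u, v⟫ - L * t * ‖v‖ ^ 2) t := by
    intro t
    have hq := ((hasDerivAt_pow 2 t).const_mul (L / 2)).mul_const (‖v‖ ^ 2)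
    refine ((((hgrad (u + t • v)).hasDerivAt_comp_add_smul).sub
      ((hasDerivAt_id t).mul_const ⟪f' u, v⟫)).sub hq).congr_deriv ?_
    simp only [inner_sub_left]
    ring
  obtain ⟨c, hc, hslope⟩ := exists_hasDerivAt_eq_slope φ _ zero_lt_one
    (fun t _ => (hφ t).continuousAt.continuousWithinAt) (fun t _ => hφ t)
  have hderiv_nonpos : ⟪f' (u + c • v) - f' u, v⟫ - L * c * ‖v‖ ^ 2 ≤ 0 := by
    have hlip_c : ‖f' (u + c • v) - f' u‖ ≤ L * (c * ‖v‖) := by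
      simpa [norm_smul, abs_of_pos hc.1] using hlip (u + c • v) u
    nlinarith [real_inner_le_norm (f' (u + c • v) - f' u) v, norm_nonneg v, hc.1]
  have hz : u + (1 : ℝ) • v = z := by simp [v]
  simp only [φ, hslope, hz, zero_smul, add_zero] at hderiv_nonpos
  linarith

theorem sq_norm_sub_gradient_le_of_convex_of_lipschitz {L : ℝ} (hL : 0 < L)
    (hgrad : ∀ x, HasGradientAt f (f' x) x) (hconv : ∀ x y, f x + ⟪f' x, y - x⟫ ≤ f y)
    (hlip : ∀ x y, ‖f' x - f' y‖ ≤ L * ‖x - y‖) (x y : E) :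
    ‖f' x - f' y‖ ^ 2 ≤ 2 * L * (f x - f y - ⟪f' y, x - y⟫) := by
  set G := f' x - f' y
  -- Compare the descent step `x - G / L` with the supporting hyperplane of `f` at `y`.
  set z := x - L⁻¹ • G
  have hdescent := le_add_inner_add_sq_of_lipschitz_gradient hgrad hlip x z
  have hsupport := hconv y z
  have hzx : z - x = -(L⁻¹ • G) := by simp [z]
  have hzy : z - y = (x - y) - L⁻¹ • G := by simp only [z]; abel
  have hG : ⟪f' x, G⟫ - ⟪f' y, G⟫ = ‖G‖ ^ 2 := by
    rw [← inner_sub_left, real_inner_self_eq_norm_sq]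
  rw [hzx, inner_neg_right, real_inner_smul_right, norm_neg, norm_smul, Real.norm_eq_abs,
    abs_of_pos (inv_pos.2 hL)] at hdescent
  rw [hzy, inner_sub_right, real_inner_smul_right] at hsupport
  have hbound : L⁻¹ * ‖G‖ ^ 2 / 2 ≤ f x - f y - ⟪f' y, x - y⟫ := by
    have hsq : L / 2 * (L⁻¹ * ‖G‖) ^ 2 = L⁻¹ * ‖G‖ ^ 2 / 2 := by field_simp
    have hGL : L⁻¹ * ⟪f' x, G⟫ - L⁻¹ * ⟪f' y, G⟫ = L⁻¹ * ‖G‖ ^ 2 := by rw [← mul_sub, hG]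
    linarith
  calc ‖G‖ ^ 2 = 2 * L * (L⁻¹ * ‖G‖ ^ 2 / 2) := by field_simp
    _ ≤ 2 * L * (f x - f y - ⟪f' y, x - y⟫) := by gcongr

end SmoothConvex

theorem neg_young_le_real_inner {E : Type*} [NormedAddCommGroup E] [InnerProductSpace ℝ E]
    {β : ℝ} (hβ : 0 < β) (a b : E) :
    -(β / 2) * ‖a‖ ^ 2 - 1 / (2 * β) * ‖b‖ ^ 2 ≤ ⟪a, b⟫ := by
  have hexpand : ‖β • a + b‖ ^ 2 / (2 * β) =
      β / 2 * ‖a‖ ^ 2 + ⟪a, b⟫ + 1 / (2 * β) * ‖b‖ ^ 2 := by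
    rw [norm_add_sq_real, norm_smul, real_inner_smul_left, Real.norm_eq_abs, abs_of_pos hβ]
    field_simp
  have hnonneg : 0 ≤ ‖β • a + b‖ ^ 2 / (2 * β) := by positivity
  linarith

theorem sum_mul_norm_sub_sum_smul_sq {ι E : Type*} [Fintype ι] [NormedAddCommGroup E]
    [InnerProductSpace ℝ E] (p : ι → ℝ) (hp1 : ∑ i, p i = 1) (b : ι → E) :
    ∑ i, p i * ‖b i - ∑ j, p j • b j‖ ^ 2 = ∑ i, p i * ‖b i‖ ^ 2 - ‖∑ j, p j • b j‖ ^ 2 := by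
  set m := ∑ j, p j • b j
  have hm : ∑ i, p i * ⟪b i, m⟫ = ‖m‖ ^ 2 := by
    simp only [← real_inner_smul_left, ← sum_inner, m, real_inner_self_eq_norm_sq]
  calc ∑ i, p i * ‖b i - m‖ ^ 2
      = ∑ i, (p i * ‖b i‖ ^ 2 - 2 * (p i * ⟪b i, m⟫) + p i * ‖m‖ ^ 2) :=
        sum_congr rfl fun i _ => by rw [norm_sub_sq_real]; ring
    _ = ∑ i, p i * ‖b i‖ ^ 2 - 2 * ∑ i, p i * ⟪b i, m⟫ + (∑ i, p i) * ‖m‖ ^ 2 := by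
        rw [sum_add_distrib, sum_sub_distrib, ← mul_sum, sum_mul]
    _ = ∑ i, p i * ‖b i‖ ^ 2 - ‖m‖ ^ 2 := by rw [hm, hp1]; ring

theorem sum_mul_real_inner_ge_young {ι E : Type*} [Fintype ι] [NormedAddCommGroup E]
    [InnerProductSpace ℝ E] {β : ℝ} (hβ : 0 < β) (p : ι → ℝ) (hp : ∀ i, 0 ≤ p i)
    (a b : ι → E) :
    -(β / 2) * ∑ i, p i * ‖a i‖ ^ 2 - 1 / (2 * β) * ∑ i, p i * ‖b i‖ ^ 2 ≤
      ∑ i, p i * ⟪a i, b i⟫ := by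
  rw [mul_sum, mul_sum, ← sum_sub_distrib]
  refine sum_le_sum fun i _ => ?_
  have := mul_le_mul_of_nonneg_left (neg_young_le_real_inner hβ (a i) (b i)) (hp i)
  linarith

section FiniteSum

variable {d n : ℕ} {f : Fin n → Euc d → ℝ} {f' : Fin n → Euc d → Euc d} {L : Fin n → ℝ}

theorem hasDerivAt_avgF_comp_add_smul (hgrad : ∀ i x, HasGradientAt (f i) (f' i x) x)
    (u v : Euc d) (t : ℝ) :
    HasDerivAt (fun s : ℝ => avgF n f (u + s • v)) ⟪avgG n f' (u + t • v), v⟫ t := by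
  have hsum := HasDerivAt.fun_sum fun i (_ : i ∈ univ) =>
    (hgrad i (u + t • v)).hasDerivAt_comp_add_smul (u := u) (v := v)
  simpa only [avgF, avgG, real_inner_smul_left, sum_inner] using hsum.const_mul (1 / (n : ℝ))

theorem avgG_eq_zero_of_forall_avgF_le (hgrad : ∀ i x, HasGradientAt (f i) (f' i x) x)
    {xstar : Euc d} (hmin : ∀ y, avgF n f xstar ≤ avgF n f y) : avgG n f' xstar = 0 := by
  set G := avgG n f' xstar
  have hloc : IsLocalMin (fun s : ℝ => avgF n f (xstar + s • -G)) 0 :=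
    Filter.Eventually.of_forall fun s => by simpa using hmin (xstar + s • -G)
  have hderiv := hasDerivAt_avgF_comp_add_smul hgrad xstar (-G) 0
  simp only [zero_smul, add_zero] at hderiv
  simpa [inner_neg_right, G] using hloc.hasDerivAt_eq_zero hderiv

theorem Ve_pIS (x w : Euc d) : Ve n f' (pIS n L) x w = Lbar n L * Dfun n f' L w x := by
  rw [Ve, Dfun, mul_sum, mul_sum, mul_sum]
  refine sum_congr rfl fun i _ => ?_
  rw [pIS, one_div_div]
  rcases eq_or_ne (n : ℝ) 0 with hn | hn
  · simp [hn]
  · field_simp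

theorem Dfun_le_two_mul_add (hL : ∀ i, 0 ≤ L i) (z x w : Euc d) :
    Dfun n f' L w x ≤ 2 * Dfun n f' L z x + 2 * Dfun n f' L z w := by
  simp only [Dfun, mul_sum, ← sum_add_distrib]
  gcongr with i
  have htri : ‖f' i x - f' i w‖ ≤ ‖f' i x - f' i z‖ + ‖f' i w - f' i z‖ := by
    simpa only [norm_sub_rev (f' i z)] using
      norm_sub_le_norm_sub_add_norm_sub (f' i x) (f' i z) (f' i w)
  have hsq : ‖f' i x - f' i w‖ ^ 2 ≤ 2 * (‖f' i x - f' i z‖ ^ 2 + ‖f' i w - f' i z‖ ^ 2) :=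
    (pow_le_pow_left₀ (norm_nonneg _) htri 2).trans add_sq_le
  have hc : 0 ≤ 1 / (n : ℝ) * (1 / L i) := mul_nonneg (by positivity) (one_div_nonneg.2 (hL i))
  nlinarith [mul_le_mul_of_nonneg_left hsq hc]

theorem Dfun_le_two_mul_avgF_sub (hgrad : ∀ i x, HasGradientAt (f i) (f' i x) x)
    (hconv : ∀ i x y, f i x + ⟪f' i x, y - x⟫ ≤ f i y) (hL : ∀ i, 0 < L i)
    (hsmooth : ∀ i x y, ‖f' i x - f' i y‖ ≤ L i * ‖x - y‖) (z x : Euc d) :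
    Dfun n f' L z x ≤ 2 * (avgF n f x - avgF n f z - ⟪avgG n f' z, x - z⟫) :=
  calc Dfun n f' L z x
      ≤ 1 / (n : ℝ) * ∑ i, 2 * (f i x - f i z - ⟪f' i z, x - z⟫) := by
        refine mul_le_mul_of_nonneg_left (sum_le_sum fun i _ => ?_) (by positivity)
        have h := sq_norm_sub_gradient_le_of_convex_of_lipschitz (hL i) (hgrad i) (hconv i)
          (hsmooth i) x z
        rw [one_div, inv_mul_le_iff₀ (hL i)]
        linarith
    _ = 2 * (avgF n f x - avgF n f z - ⟪avgG n f' z, x - z⟫) := by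
        simp only [avgF, avgG, real_inner_smul_left, sum_inner, ← mul_sum, sum_sub_distrib]
        ring

theorem sum_mul_norm_sq_sub_avgG_le_Ve {p : Fin n → ℝ} (hp : ∀ i, p i ≠ 0) (hp1 : ∑ i, p i = 1)
    (x w : Euc d) (g : Fin n → Euc d)
    (hg : ∀ i, g i = (1 / ((n : ℝ) * p i)) • (f' i x - f' i w) + avgG n f' w) :
    ∑ i, p i * ‖g i - avgG n f' x‖ ^ 2 ≤ Ve n f' p x w := by
  set b : Fin n → Euc d := fun i => (1 / ((n : ℝ) * p i)) • (f' i x - f' i w)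
  have hmean : ∑ j, p j • b j = avgG n f' x - avgG n f' w := by
    have hpb : ∀ j, p j • b j = (1 / (n : ℝ)) • (f' j x - f' j w) := fun j => by
      rw [smul_smul]
      congr 1
      field_simp [hp j]
    simp only [hpb, avgG, ← smul_sub, ← smul_sum, sum_sub_distrib]
  have hcentered : ∀ i, g i - avgG n f' x = b i - ∑ j, p j • b j := fun i => by
    rw [hmean, hg i]
    abel
  have hsecond : ∑ i, p i * ‖b i‖ ^ 2 = Ve n f' p x w := by
    rw [Ve, mul_sum]
    refine sum_congr rfl fun i _ => ?_
    rw [norm_smul, mul_pow, Real.norm_eq_abs, sq_abs]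
    field_simp [hp i]
  calc ∑ i, p i * ‖g i - avgG n f' x‖ ^ 2
      = ∑ i, p i * ‖b i‖ ^ 2 - ‖∑ j, p j • b j‖ ^ 2 := by
        simp only [hcentered, sum_mul_norm_sub_sum_smul_sq p hp1]
    _ ≤ Ve n f' p x w := by
        rw [← hsecond]
        exact sub_le_self _ (sq_nonneg _)

end FiniteSum

theorem as_lsvrg_inner_product_lower_bound_general (d n : ℕ)
    (f : Fin n → Euc d → ℝ) (f' : Fin n → Euc d → Euc d) (L : Fin n → ℝ)
    (hgrad : ∀ i x, HasGradientAt (f i) (f' i x) x)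
    (hconv : ∀ i x y, f i x + ⟪f' i x, y - x⟫ ≤ f i y)
    (hLpos : ∀ i, 0 < L i)
    (hsmooth : ∀ i x y, ‖f' i x - f' i y‖ ≤ L i * ‖x - y‖)
    (xstar : Euc d) (hmin : ∀ y, avgF n f xstar ≤ avgF n f y)
    (p : Fin n → ℝ) (hp : ∀ i, 0 < p i) (hp1 : ∑ i, p i = 1)
    (x w : Euc d) (η β : ℝ) (hβ : 0 < β)
    (g : Fin n → Euc d)
    (hg : ∀ i, g i = (1 / ((n : ℝ) * p i)) • (f' i x - f' i w) + avgG n f' w) :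
    ∑ i, p i * ⟪g i - avgG n f' x, -(η • g i)⟫ ≥
      -(2 * β * Lbar n L * (avgF n f x - avgF n f xstar)) -
      β * Lbar n L * Dfun n f' L xstar w -
      (β / 2) * (Ve n f' p x w - Ve n f' (pIS n L) x w) -
      (1 / (2 * β)) * ∑ i, p i * ‖η • g i‖ ^ 2 := by
  have hLbar : 0 ≤ Lbar n L := mul_nonneg (by positivity) (sum_nonneg fun i _ => (hLpos i).le)
  have hD : Dfun n f' L w x ≤ 4 * (avgF n f x - avgF n f xstar) + 2 * Dfun n f' L xstar w := by
    have htri := Dfun_le_two_mul_add (f' := f') (fun i => (hLpos i).le) xstar x w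
    have hbregman := Dfun_le_two_mul_avgF_sub hgrad hconv hLpos hsmooth xstar x
    rw [avgG_eq_zero_of_forall_avgF_le hgrad hmin, inner_zero_left, sub_zero] at hbregman
    linarith
  have hyoung := sum_mul_real_inner_ge_young hβ p (fun i => (hp i).le)
    (fun i => g i - avgG n f' x) (fun i => -(η • g i))
  have hvar := sum_mul_norm_sq_sub_avgG_le_Ve (fun i => (hp i).ne') hp1 x w g hg
  simp only [norm_neg] at hyoung
  rw [Ve_pIS]
  nlinarith [mul_le_mul_of_nonneg_left hD (mul_nonneg hβ.le hLbar),
    mul_le_mul_of_nonneg_left hvar hβ.le]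

/-- lower bound on the inner-product term in the weakly convex analysis. -/
theorem as_lsvrg_inner_product_lower_bound (d n : ℕ) (hd : 0 < d) (hn : 0 < n)
    (f : Fin n → Euc d → ℝ) (f' : Fin n → Euc d → Euc d) (L : Fin n → ℝ)
    (hgrad : ∀ i x, HasGradientAt (f i) (f' i x) x)
    (hconv : ∀ i x y, f i x + ⟪f' i x, y - x⟫ ≤ f i y)
    (hLpos : ∀ i, 0 < L i)
    (hsmooth : ∀ i x y, ‖f' i x - f' i y‖ ≤ L i * ‖x - y‖)
    (xstar : Euc d) (hmin : ∀ y, avgF n f xstar ≤ avgF n f y)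
    (p : Fin n → ℝ) (hp : ∀ i, 0 < p i) (hp1 : ∑ i, p i = 1)
    (x w : Euc d) (η β : ℝ) (hη : 0 < η) (hβ : 0 < β)
    (g : Fin n → Euc d)
    (hg : ∀ i, g i = (1 / ((n : ℝ) * p i)) • (f' i x - f' i w) + avgG n f' w) :
    ∑ i, p i * ⟪g i - avgG n f' x, -(η • g i)⟫ ≥
      -(2 * β * Lbar n L * (avgF n f x - avgF n f xstar)) -
      β * Lbar n L * Dfun n f' L xstar w -
      (β / 2) * (Ve n f' p x w - Ve n f' (pIS n L) x w) -
      (1 / (2 * β)) * ∑ i, p i * ‖η • g i‖ ^ 2 :=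
  as_lsvrg_inner_product_lower_bound_general d n f f' L hgrad hconv hLpos hsmooth xstar hmin p hp
    hp1 x w η β hβ g hg
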